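/- arXiv:2411.01402 — 4 statements merged into one kernel-verified Lean document; each statement's English description precedes it below -/
import Mathlib

section
/- Let α > 0, n > 1, m = 1 − 1/n, and 0 ≤ θ_res < θ_sat < 1 be real parameters. Define θ_S : ℝ → ℝ by θ_S(h) = (θ_sat − 1)·(1 + (α·h)^n)^(−m) + 1 for h > 0, and θ_S(h) = θ_res + (θ_sat − θ_res)·(1 + (−α·h)^n)^(−m) for h ≤ 0, where powers are real powers. Then θ_S is strictly monotone increasing on ℝ. -/
/-- The extended van Genuchten soil water content function. All powers are real powers. -/
noncomputable def thetaVG (α n m θres θsat : ℝ) (h : ℝ) : ℝ :=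
  if 0 < h then (θsat - 1) * (1 + (α * h) ^ n) ^ (-m) + 1
  else θres + (θsat - θres) * (1 + (-(α * h)) ^ n) ^ (-m)

/-- The extended van Genuchten water content function is strictly increasing. -/
theorem thetaVG_strictMono (α n m θres θsat : ℝ) (hα : 0 < α) (hn : 1 < n)
    (hm : m = 1 - 1 / n) (hres : 0 ≤ θres) (hlt : θres < θsat) (hsat : θsat < 1) :
    StrictMono (thetaVG α n m θres θsat) := by
  have hn0 : (0:ℝ) < n := by linarith
  have hm0 : 0 < m := by
    rw [hm]
    have : 1 / n < 1 := by
      rw [div_lt_one hn0]; exact hn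
    linarith
  have hmneg : -m < 0 := by linarith
  -- value of neg branch is ≤ θsat, value of pos branch is > θsat
  have negle : ∀ h : ℝ, h ≤ 0 →
      θres + (θsat - θres) * (1 + (-(α * h)) ^ n) ^ (-m) ≤ θsat := by
    intro h hh
    have hx : 0 ≤ -(α * h) := by nlinarith
    have hxn : 0 ≤ (-(α * h)) ^ n := Real.rpow_nonneg hx n
    have h1 : (1:ℝ) ≤ 1 + (-(α * h)) ^ n := by linarith
    have := Real.rpow_le_one_of_one_le_of_nonpos h1 (le_of_lt hmneg)
    nlinarith
  have posgt : ∀ h : ℝ, 0 < h →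
      θsat < (θsat - 1) * (1 + (α * h) ^ n) ^ (-m) + 1 := by
    intro h hh
    have hx : 0 < α * h := mul_pos hα hh
    have hxn : 0 < (α * h) ^ n := Real.rpow_pos_of_pos hx n
    have h1 : (1:ℝ) < 1 + (α * h) ^ n := by linarith
    have := Real.rpow_lt_one_of_one_lt_of_neg h1 hmneg
    nlinarith
  intro a b hab
  unfold thetaVG
  by_cases ha : 0 < a
  · have hb : 0 < b := lt_trans ha hab
    rw [if_pos ha, if_pos hb]
    have hx1 : 0 < α * a := mul_pos hα ha
    have hxy : α * a < α * b := by nlinarith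
    have h1 : (α * a) ^ n < (α * b) ^ n :=
      Real.rpow_lt_rpow (le_of_lt hx1) hxy hn0
    have h2 : (0:ℝ) < 1 + (α * a) ^ n := by
      have := Real.rpow_pos_of_pos hx1 n; linarith
    have h3 : (1 + (α * b) ^ n) ^ (-m) < (1 + (α * a) ^ n) ^ (-m) :=
      Real.rpow_lt_rpow_of_neg h2 (by linarith) hmneg
    nlinarith
  · rw [if_neg ha]
    by_cases hb : 0 < b
    · rw [if_pos hb]
      exact lt_of_le_of_lt (negle a (not_lt.1 ha)) (posgt b hb)
    · rw [if_neg hb]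
      have hb' : b ≤ 0 := not_lt.1 hb
      have hx2 : 0 ≤ -(α * b) := by nlinarith
      have hxy : -(α * b) < -(α * a) := by nlinarith
      have h1 : (-(α * b)) ^ n < (-(α * a)) ^ n :=
        Real.rpow_lt_rpow hx2 hxy hn0
      have h2 : (0:ℝ) < 1 + (-(α * b)) ^ n := by
        have := Real.rpow_nonneg hx2 n; linarith
      have h3 : (1 + (-(α * a)) ^ n) ^ (-m) < (1 + (-(α * b)) ^ n) ^ (-m) :=
        Real.rpow_lt_rpow_of_neg h2 (by linarith) hmneg
      nlinarith
end

section
/- Let α > 0, n > 1, m = 1 − 1/n, and 0 ≤ θ_res < θ_sat < 1 be real parameters. Define θ_S : ℝ → ℝ by θ_S(h) = (θ_sat − 1)·(1 + (α·h)^n)^(−m) + 1 for h > 0, and θ_S(h) = θ_res + (θ_sat − θ_res)·(1 + (−α·h)^n)^(−m) for h ≤ 0, where powers are real powers. Then θ_S is continuous on ℝ and satisfies θ_res < θ_S(h) < 1 for all h ∈ ℝ. -/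
/-- The extended van Genuchten water content function is continuous and satisfies
`θres < θ_S(h) < 1` for all `h`. -/
theorem thetaVG_continuous_bounds (α n m θres θsat : ℝ) (hα : 0 < α) (hn : 1 < n)
    (hm : m = 1 - 1 / n) (hres : 0 ≤ θres) (hlt : θres < θsat) (hsat : θsat < 1) :
    Continuous (thetaVG α n m θres θsat) ∧
      ∀ h : ℝ, θres < thetaVG α n m θres θsat h ∧ thetaVG α n m θres θsat h < 1 := by
  have hn0 : (0:ℝ) < n := by linarith
  have hm0 : 0 < m := by
    rw [hm]
    have : 1 / n < 1 := (div_lt_one hn0).mpr hn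
    linarith
  constructor
  · have key : thetaVG α n m θres θsat = fun h =>
        if h ≤ 0 then θres + (θsat - θres) * (1 + |α * h| ^ n) ^ (-m)
        else (θsat - 1) * (1 + |α * h| ^ n) ^ (-m) + 1 := by
      funext h
      unfold thetaVG
      rcases lt_or_ge 0 h with hh | hh
      · rw [if_pos hh, if_neg (not_le.mpr hh), abs_of_pos (mul_pos hα hh)]
      · rw [if_neg (not_lt.mpr hh), if_pos hh,
          abs_of_nonpos (mul_nonpos_of_nonneg_of_nonpos hα.le hh)]
    rw [key]
    have hbase : Continuous fun h : ℝ => (1 + |α * h| ^ n) ^ (-m) := by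
      have h1 : Continuous fun h : ℝ => |α * h| ^ n :=
        (continuous_abs.comp (continuous_const.mul continuous_id)).rpow_const
          fun x => Or.inr hn0.le
      have h2 : Continuous fun h : ℝ => 1 + |α * h| ^ n := continuous_const.add h1
      refine h2.rpow_const fun x => Or.inl ?_
      have : (0:ℝ) ≤ |α * x| ^ n := Real.rpow_nonneg (abs_nonneg _) n
      positivity
    apply Continuous.if_le
    · exact continuous_const.add (continuous_const.mul hbase)
    · exact (continuous_const.mul hbase).add continuous_const
    · exact continuous_id
    · exact continuous_const
    · intro x hx
      have hx0 : x = 0 := hx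
      subst hx0
      simp [Real.zero_rpow (ne_of_gt hn0)]
  · intro h
    unfold thetaVG
    rcases lt_or_ge 0 h with hh | hh
    · rw [if_pos hh]
      set t := (1 + (α * h) ^ n) ^ (-m) with ht
      have hs : 0 < (α * h) ^ n := Real.rpow_pos_of_pos (mul_pos hα hh) n
      have ht0 : 0 < t := Real.rpow_pos_of_pos (by linarith) _
      have ht1 : t ≤ 1 := Real.rpow_le_one_of_one_le_of_nonpos (by linarith) (by linarith)
      constructor
      · nlinarith [mul_le_mul_of_nonpos_left ht1 (by linarith : θsat - 1 ≤ 0)]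
      · nlinarith
    · rw [if_neg (not_lt.mpr hh)]
      set t := (1 + (-(α * h)) ^ n) ^ (-m) with ht
      have hs : 0 ≤ (-(α * h)) ^ n := Real.rpow_nonneg (by nlinarith) n
      have ht0 : 0 < t := Real.rpow_pos_of_pos (by linarith) _
      have ht1 : t ≤ 1 := Real.rpow_le_one_of_one_le_of_nonpos (by linarith) (by linarith)
      constructor
      · nlinarith
      · nlinarith
end

section
/- Let α > 0, n > 1, m = 1 − 1/n, E > 0, h_ae < 0, λ > 0 and 0 < θ_sat < 1 be real parameters with θ_sat + h_ae/E > 0. Define θ_P : ℝ → ℝ by θ_P(h) = (θ_sat − 1)·(1 + (α·h)^n)^(−m) + 1 for h > 0; θ_P(h) = θ_sat + h/E for h_ae ≤ h ≤ 0; and θ_P(h) = (θ_sat + h_ae/E)·(h/h_ae)^(−λ) for h < h_ae, where powers are real powers. Then θ_P is continuous and strictly monotone increasing on ℝ. -/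
/-- The extended root tissue water content function: a van Genuchten branch for
`h > 0`, a linear elastic branch for `h_ae ≤ h ≤ 0`, and a Brooks–Corey branch
for `h < h_ae`. All powers are real powers. -/
noncomputable def thetaRoot (α n m E hae lam θsat : ℝ) (h : ℝ) : ℝ :=
  if 0 < h then (θsat - 1) * (1 + (α * h) ^ n) ^ (-m) + 1
  else if hae ≤ h then θsat + h / E
  else (θsat + hae / E) * (h / hae) ^ (-lam)

/-- The extended root water content function is continuous and strictly increasing. -/
theorem thetaRoot_continuous_strictMono (α n m E hae lam θsat : ℝ)
    (hα : 0 < α) (hn : 1 < n) (hm : m = 1 - 1 / n) (hE : 0 < E) (hae_neg : hae < 0)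
    (hlam : 0 < lam) (hsat0 : 0 < θsat) (hsat1 : θsat < 1)
    (hpos : 0 < θsat + hae / E) :
    Continuous (thetaRoot α n m E hae lam θsat) ∧
      StrictMono (thetaRoot α n m E hae lam θsat) := by
  have hn0 : 0 < n := lt_trans one_pos hn
  have hmpos : 0 < m := by
    rw [hm]
    have h1 : 1 / n < 1 := by rw [div_lt_one hn0]; exact hn
    linarith
  set f := thetaRoot α n m E hae lam θsat with hfdef
  -- branch value lemmas
  have val1 : ∀ h : ℝ, 0 ≤ h → f h = (θsat - 1) * (1 + (α * h) ^ n) ^ (-m) + 1 := by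
    intro h hh
    rcases eq_or_lt_of_le hh with rfl | hh'
    · simp only [f, thetaRoot, lt_irrefl, if_false, if_pos hae_neg.le, mul_zero,
        Real.zero_rpow hn0.ne', add_zero, Real.one_rpow, zero_div]
      ring
    · simp only [f, thetaRoot, if_pos hh']
  have val2 : ∀ h : ℝ, hae ≤ h → h ≤ 0 → f h = θsat + h / E := by
    intro h h1 h2
    simp only [f, thetaRoot, if_neg (not_lt.mpr h2), if_pos h1]
  have val3 : ∀ h : ℝ, h ≤ hae → f h = (θsat + hae / E) * (h / hae) ^ (-lam) := by
    intro h hh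
    rcases eq_or_lt_of_le hh with rfl | hh'
    · rw [div_self hae_neg.ne, Real.one_rpow, mul_one]
      simp only [f, thetaRoot, if_neg (not_lt.mpr hae_neg.le), if_pos le_rfl]
    · simp only [f, thetaRoot, if_neg (not_lt.mpr (hh'.le.trans hae_neg.le)),
        if_neg (not_le.mpr hh')]
  -- piecewise monotonicity
  have mono1 : ∀ ⦃x y : ℝ⦄, 0 ≤ x → x < y → f x < f y := by
    intro x y hx hxy
    rw [val1 x hx, val1 y (hx.trans hxy.le)]
    have hax : (0:ℝ) ≤ α * x := mul_nonneg hα.le hx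
    have hr : (α * x) ^ n < (α * y) ^ n :=
      Real.rpow_lt_rpow hax (by nlinarith) hn0
    have hA : (0:ℝ) < 1 + (α * x) ^ n := by
      have := Real.rpow_nonneg hax n; linarith
    have key : (1 + (α * y) ^ n) ^ (-m) < (1 + (α * x) ^ n) ^ (-m) :=
      Real.rpow_lt_rpow_of_neg hA (by linarith) (neg_lt_zero.mpr hmpos)
    nlinarith [key]
  have mono2 : ∀ ⦃x y : ℝ⦄, hae ≤ x → x < y → y ≤ 0 → f x < f y := by
    intro x y h1 h2 h3
    rw [val2 x h1 (by linarith), val2 y (by linarith) h3]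
    have : x / E < y / E := div_lt_div_of_pos_right h2 hE
    linarith
  have mono3 : ∀ ⦃x y : ℝ⦄, x < y → y ≤ hae → f x < f y := by
    intro x y hxy hy
    rw [val3 x (by linarith), val3 y hy]
    have hby : (0:ℝ) < y / hae := div_pos_of_neg_of_neg (hy.trans_lt hae_neg) hae_neg
    have hlt : y / hae < x / hae := by
      have h1 : x / hae - y / hae = (x - y) / hae := by ring
      have h2 : (0:ℝ) < (x - y) / hae := div_pos_of_neg_of_neg (by linarith) hae_neg
      linarith
    have key : (x / hae) ^ (-lam) < (y / hae) ^ (-lam) :=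
      Real.rpow_lt_rpow_of_neg hby hlt (neg_lt_zero.mpr hlam)
    exact mul_lt_mul_of_pos_left key hpos
  -- strict monotonicity
  have smono : StrictMono f := by
    intro x y hxy
    rcases le_or_gt y hae with hy | hy
    · exact mono3 hxy hy
    · rcases le_or_gt y 0 with hy0 | hy0
      · rcases le_or_gt hae x with hx | hx
        · exact mono2 hx hxy hy0
        · exact (mono3 hx le_rfl).trans (mono2 le_rfl hy hy0)
      · rcases le_or_gt 0 x with hx | hx
        · exact mono1 hx hxy
        · have hx0 : f x < f 0 := by
            rcases le_or_gt hae x with hx' | hx'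
            · exact mono2 hx' hx le_rfl
            · exact (mono3 hx' le_rfl).trans (mono2 le_rfl hae_neg le_rfl)
          exact hx0.trans (mono1 le_rfl hy0)
  -- continuity on pieces
  have cont3 : ContinuousOn f (Set.Iic hae) := by
    apply ContinuousOn.congr (f := fun h => (θsat + hae / E) * (h / hae) ^ (-lam))
    · apply ContinuousOn.mul continuousOn_const
      intro x hx
      have hx0 : x / hae ≠ 0 :=
        ne_of_gt (div_pos_of_neg_of_neg ((Set.mem_Iic.mp hx).trans_lt hae_neg) hae_neg)
      exact (((continuous_id.div_const hae).continuousAt).rpow_const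
        (Or.inl hx0)).continuousWithinAt
    · intro x hx
      exact val3 x hx
  have cont2 : ContinuousOn f (Set.Icc hae 0) := by
    apply ContinuousOn.congr (f := fun h => θsat + h / E)
    · exact (continuous_const.add (continuous_id.div_const E)).continuousOn
    · intro x hx
      exact val2 x hx.1 hx.2
  have cont1 : ContinuousOn f (Set.Ici 0) := by
    apply ContinuousOn.congr (f := fun h => (θsat - 1) * (1 + (α * h) ^ n) ^ (-m) + 1)
    · intro x hx
      apply ContinuousAt.continuousWithinAt
      have hax : (0:ℝ) ≤ α * x := mul_nonneg hα.le (Set.mem_Ici.mp hx)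
      have hA : (1:ℝ) + (α * x) ^ n ≠ 0 := by
        have := Real.rpow_nonneg hax n; intro h; linarith
      have hinner : ContinuousAt (fun h : ℝ => 1 + (α * h) ^ n) x :=
        continuousAt_const.add
          (((continuous_const.mul continuous_id).continuousAt).rpow_const (Or.inr hn0.le))
      exact (continuousAt_const.mul (hinner.rpow_const (Or.inl hA))).add continuousAt_const
    · intro x hx
      exact val1 x hx
  have cover : Set.Iic hae ∪ (Set.Icc hae 0 ∪ Set.Ici (0:ℝ)) = Set.univ := by
    ext x
    simp only [Set.mem_union, Set.mem_Iic, Set.mem_Icc, Set.mem_Ici, Set.mem_univ, iff_true]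
    rcases le_total x hae with h | h
    · exact Or.inl h
    · rcases le_total x 0 with h' | h'
      · exact Or.inr (Or.inl ⟨h, h'⟩)
      · exact Or.inr (Or.inr h')
  have contf : Continuous f := by
    rw [continuous_iff_continuousAt]
    intro x
    rw [← continuousWithinAt_univ, ← cover]
    have get : ∀ s : Set ℝ, IsClosed s → ContinuousOn f s → ContinuousWithinAt f s x := by
      intro s hs hc
      by_cases hx : x ∈ s
      · exact hc x hx
      · exact continuousWithinAt_of_notMem_closure (by rwa [hs.closure_eq])
    exact (get _ isClosed_Iic cont3).union
      ((get _ isClosed_Icc cont2).union (get _ isClosed_Ici cont1))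
  exact ⟨contf, smono⟩
end

section
/- Let α > 0, n > 1, m = 1 − 1/n, 0 ≤ θ_res < θ_sat, and 0 < δ < θ_sat − θ_res be real parameters. Define, for h ≤ 0, θ_{S,δ}(h) = θ_res + (θ_sat − θ_res − δ)·(1 + (−α·h)^n)^(−m) + δ/2 (real powers). Then θ_{S,δ} is strictly monotone increasing on (−∞, 0], and for every h ≤ 0 it satisfies θ_res + δ/2 < θ_{S,δ}(h) ≤ θ_sat − δ/2. -/
/-- The regularized van Genuchten soil water content on `(-∞, 0]`:
`θ_{S,δ}(h) = θres + (θsat − θres − δ)·(1 + (−α·h)^n)^(−m) + δ/2`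
(real powers). -/
noncomputable def thetaVGreg (α n m θres θsat δ : ℝ) (h : ℝ) : ℝ :=
  θres + (θsat - θres - δ) * (1 + (-(α * h)) ^ n) ^ (-m) + δ / 2

/-- The regularized water content is strictly increasing on `(-∞, 0]` and satisfies
`θres + δ/2 < θ_{S,δ}(h) ≤ θsat − δ/2` for all `h ≤ 0`. -/
theorem thetaVGreg_strictMonoOn_bounds (α n m θres θsat δ : ℝ) (hα : 0 < α) (hn : 1 < n)
    (hm : m = 1 - 1 / n) (hres : 0 ≤ θres) (hlt : θres < θsat)
    (hδ0 : 0 < δ) (hδ : δ < θsat - θres) :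
    StrictMonoOn (thetaVGreg α n m θres θsat δ) (Set.Iic 0) ∧
      ∀ h : ℝ, h ≤ 0 →
        θres + δ / 2 < thetaVGreg α n m θres θsat δ h ∧
        thetaVGreg α n m θres θsat δ h ≤ θsat - δ / 2 := by
  have hn0 : (0:ℝ) < n := by linarith
  have hm0 : 0 < m := by
    rw [hm]
    have : 1 / n < 1 := by
      rw [div_lt_one hn0]; exact hn
    linarith
  have hc : 0 < θsat - θres - δ := by linarith
  constructor
  · intro h1 hh1 h2 hh2 hlt12
    simp only [Set.mem_Iic] at hh1 hh2
    have ha1 : 0 ≤ -(α * h2) := by nlinarith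
    have ha2 : -(α * h2) < -(α * h1) := by nlinarith
    have hp : (-(α * h2)) ^ n < (-(α * h1)) ^ n :=
      Real.rpow_lt_rpow ha1 ha2 hn0
    have hb2 : (0:ℝ) < 1 + (-(α * h2)) ^ n := by
      have := Real.rpow_nonneg ha1 n; linarith
    have hkey : (1 + (-(α * h1)) ^ n) ^ (-m) < (1 + (-(α * h2)) ^ n) ^ (-m) :=
      Real.rpow_lt_rpow_of_neg hb2 (by linarith) (by linarith)
    unfold thetaVGreg
    nlinarith [mul_lt_mul_of_pos_left hkey hc]
  · intro h hh
    have ha : 0 ≤ -(α * h) := by nlinarith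
    have hpn : 0 ≤ (-(α * h)) ^ n := Real.rpow_nonneg ha n
    have hbpos : (0:ℝ) < 1 + (-(α * h)) ^ n := by linarith
    have hpos : 0 < (1 + (-(α * h)) ^ n) ^ (-m) := Real.rpow_pos_of_pos hbpos _
    have hle1 : (1 + (-(α * h)) ^ n) ^ (-m) ≤ 1 :=
      Real.rpow_le_one_of_one_le_of_nonpos (by linarith) (by linarith)
    unfold thetaVGreg
    constructor
    · nlinarith
    · nlinarith
end
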